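/- arXiv:0911.4322 — 5 statements merged into one kernel-verified Lean document; each statement's English description precedes it below -/
import Mathlib

section
/- Let G be a finite simple graph on vertex set V with a proper pair-coloring f, and let W = Option V, with target vertex t = none. For i ∈ {1,2} define: the initial row vector a^i on W by a^i(some u) = 1/|S_i| if u ∈ S_i and a^i = 0 at all other entries (in particular a^i(t) = 0, and a^i is the zero vector if S_i is empty); the transition matrix M^i on W by M^i(some u)(some v) = 1/z_u if u ∈ S_i, v ∈ P_i and u,v are adjacent in G, where z_u = |N(u) ∩ P_i|; M^i(some v)(t) = 1 if v ∈ P_i; and all other entries of M^i equal 0. For Q ⊆ V let M^i_Q denote the node-interdicted matrix obtained from M^i by zeroing all rows indexed by some u with u ∈ Q, and define the capture probability J^i(Q) = 1 - (a^i ᵥ* (1 - M^i_Q)⁻¹)(t), where the inverse is the matrix inverse over ℝ. Then (J^1(Q) + J^2(Q))/2 = 1 if and only if Q is a vertex cover of G. -/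
/-!
Every transition of the instance strictly lowers the level target < penultimate < source, so
the interdicted matrix `N` satisfies `N ^ 3 = 0` and `(1 - N)⁻¹ = 1 + N + N ^ 2`. The start
vector vanishes at the target and sources never step directly to the target, so the escape
probability `1 - J(Q)` is `(a ᵥ* N ^ 2) t`: a sum of nonnegative weights of walks `u → v → t`,
positive exactly along edges from a source `u` to a penultimate `v` with `u, v ∉ Q`. Hence
`J(Q) = 1` iff `Q` covers every edge whose endpoints get different bits. Both capture
probabilities are at most `1`, so their average is `1` iff both are, and properness of `f`
makes every edge bichromatic for some evader.
-/

open Matrix Finset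

noncomputable section

variable {V : Type*} [Fintype V] [DecidableEq V]

/-- Source set of the evader with bit function `g`: vertices whose bit is `false`. -/
def srcSet (g : V → Bool) : Finset V := Finset.univ.filter (fun u => g u = false)

/-- Penultimate set of the evader with bit function `g`: vertices whose bit is `true`. -/
def penSet (g : V → Bool) : Finset V := Finset.univ.filter (fun u => g u = true)

/-- The initial (source) row vector on `W = Option V` of the evader with bit function `g`:
uniform on the source set (at `some u` for `u` in the source set), zero elsewhere; in
particular it is zero at the target `none`, and is the zero vector if the source set is
empty (`1/0 = 0` in `ℝ`). -/
def initVec (g : V → Bool) : Option V → ℝ := fun w =>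
  match w with
  | none => 0
  | some u => if u ∈ srcSet g then 1 / ((srcSet g).card : ℝ) else 0

/-- The transition matrix on `W = Option V` of the evader with bit function `g` on the graph
`G`: from a source node `u`, move to an adjacent penultimate node `v` with probability
`1 / z_u` where `z_u = |N(u) ∩ P|`; from a penultimate node, move to the target `none` with
probability `1`; all other entries are `0`. -/
def transMat (G : SimpleGraph V) [DecidableRel G.Adj] (g : V → Bool) :
    Matrix (Option V) (Option V) ℝ := fun w w' =>
  match w, w' with
  | some u, some v =>
      if u ∈ srcSet g ∧ v ∈ penSet g ∧ G.Adj u v then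
        1 / ((G.neighborFinset u ∩ penSet g).card : ℝ)
      else 0
  | some v, none => if v ∈ penSet g then 1 else 0
  | none, _ => 0

/-- The node-interdicted matrix `M_Q` on `W = Option V`: rows indexed by `some u` with
`u ∈ Q` are zeroed (perfect sensors on all edges leaving nodes of `Q`). -/
def interdictOpt (M : Matrix (Option V) (Option V) ℝ) (Q : Finset V) :
    Matrix (Option V) (Option V) ℝ := fun w w' =>
  match w with
  | some u => if u ∈ Q then 0 else M (some u) w'
  | none => M none w'

/-- The capture probability `J(Q) = 1 - (a ᵥ* (1 - M_Q)⁻¹) t` of the evader with bit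
function `g` on `G` under the interdiction set `Q`, the target being `t = none`. -/
def captureProb (G : SimpleGraph V) [DecidableRel G.Adj] (g : V → Bool) (Q : Finset V) :
    ℝ :=
  1 - (initVec g ᵥ* (1 - interdictOpt (transMat G g) Q)⁻¹) none

namespace Matrix

variable {ι R : Type*} [Fintype ι]

theorem add_le_of_pow_apply_ne_zero [DecidableEq ι] [Semiring R] {M : Matrix ι ι R}
    {r : ι → ℕ} (hM : ∀ i j, M i j ≠ 0 → r j < r i) :
    ∀ (n : ℕ) {i j : ι}, (M ^ n) i j ≠ 0 → r j + n ≤ r i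
  | 0, i, j, h => by
    obtain rfl : i = j := by by_contra hij; exact h (by simp [hij])
    simp
  | n + 1, i, j, h => by
    rw [pow_succ, mul_apply] at h
    obtain ⟨k, -, hk⟩ := Finset.exists_ne_zero_of_sum_ne_zero h
    have hik := add_le_of_pow_apply_ne_zero hM n (left_ne_zero_of_mul hk)
    have hkj := hM k j (right_ne_zero_of_mul hk)
    omega

theorem pow_eq_zero_of_apply_ne_zero_imp_lt [DecidableEq ι] [Semiring R]
    {M : Matrix ι ι R} {r : ι → ℕ} {n : ℕ} (hM : ∀ i j, M i j ≠ 0 → r j < r i)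
    (hr : ∀ i, r i < n) : M ^ n = 0 := by
  ext i j
  by_contra h
  have := add_le_of_pow_apply_ne_zero hM n h
  have := hr i
  omega

theorem inv_one_sub_eq_geom_sum [DecidableEq ι] [CommRing R] {N : Matrix ι ι R} {n : ℕ}
    (hN : N ^ n = 0) :
    (1 - N)⁻¹ = ∑ i ∈ Finset.range n, N ^ i :=
  inv_eq_right_inv (by rw [mul_neg_geom_sum, hN, sub_zero])

section OrderedSemiring

variable [Semiring R] [PartialOrder R] [IsOrderedRing R] {ι' : Type*} {a : ι → R}
  {M : Matrix ι ι' R}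

theorem vecMul_nonneg (ha : 0 ≤ a) (hM : ∀ i j, 0 ≤ M i j) : 0 ≤ a ᵥ* M :=
  fun j => dotProduct_nonneg_of_nonneg ha (fun i => hM i j)

theorem vecMul_apply_eq_zero_iff_of_nonneg [NoZeroDivisors R] (ha : 0 ≤ a)
    (hM : ∀ i j, 0 ≤ M i j) (j : ι') : (a ᵥ* M) j = 0 ↔ ∀ i, a i = 0 ∨ M i j = 0 := by
  simp only [vecMul, dotProduct, ← mul_eq_zero]
  exact Fintype.sum_eq_zero_iff_of_nonneg (fun i => mul_nonneg (ha i) (hM i j)) |>.trans funext_iff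

end OrderedSemiring

end Matrix

section Reduction

variable (G : SimpleGraph V) [DecidableRel G.Adj] (g : V → Bool) (Q : Finset V)

lemma initVec_nonneg : 0 ≤ initVec g := by
  intro w
  cases w <;> simp only [initVec] <;> positivity

lemma initVec_some_eq_zero_iff {u : V} : initVec g (some u) = 0 ↔ g u = true := by
  have hcard : u ∈ srcSet g → (srcSet g).card ≠ 0 := fun hu => card_ne_zero_of_mem hu
  by_cases hu : g u <;> simp_all [initVec, srcSet]

lemma interdictOpt_transMat_nonneg (w w' : Option V) :
    0 ≤ interdictOpt (transMat G g) Q w w' := by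
  rcases w with _ | u <;> rcases w' with _ | v <;>
    simp only [interdictOpt, transMat] <;> positivity

lemma interdictOpt_transMat_none (w : Option V) :
    interdictOpt (transMat G g) Q none w = 0 := by
  cases w <;> rfl

lemma interdictOpt_transMat_some_some_eq_zero_iff {u v : V} :
    interdictOpt (transMat G g) Q (some u) (some v) = 0 ↔
      u ∈ Q ∨ ¬(g u = false ∧ g v = true ∧ G.Adj u v) := by
  have hcard : v ∈ penSet g → G.Adj u v → (G.neighborFinset u ∩ penSet g).card ≠ 0 :=
    fun hv huv => card_ne_zero_of_mem (mem_inter.2 ⟨(G.mem_neighborFinset u v).2 huv, hv⟩)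
  by_cases huQ : u ∈ Q <;> simp_all [interdictOpt, transMat, srcSet, penSet]

lemma interdictOpt_transMat_some_none_eq_zero_iff {v : V} :
    interdictOpt (transMat G g) Q (some v) none = 0 ↔ v ∈ Q ∨ g v = false := by
  by_cases hvQ : v ∈ Q <;> simp_all [interdictOpt, transMat, penSet]

def level : Option V → ℕ
  | none => 0
  | some u => if g u then 1 else 2

lemma level_lt_of_interdictOpt_transMat_ne_zero {w w' : Option V}
    (h : interdictOpt (transMat G g) Q w w' ≠ 0) : level g w' < level g w := by
  rcases w with _ | u
  · exact absurd (interdictOpt_transMat_none G g Q w') h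
  rcases w' with _ | v
  · rw [Ne, interdictOpt_transMat_some_none_eq_zero_iff] at h
    simp_all [level]
  · rw [Ne, interdictOpt_transMat_some_some_eq_zero_iff] at h
    simp_all [level]

lemma interdictOpt_transMat_pow_three : interdictOpt (transMat G g) Q ^ 3 = 0 :=
  pow_eq_zero_of_apply_ne_zero_imp_lt (fun _ _ => level_lt_of_interdictOpt_transMat_ne_zero G g Q)
    (by rintro (_ | u) <;> simp only [level] <;> grind)

lemma initVec_vecMul_interdictOpt_transMat_none :
    (initVec g ᵥ* interdictOpt (transMat G g) Q) none = 0 := by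
  refine (vecMul_apply_eq_zero_iff_of_nonneg (initVec_nonneg g)
    (interdictOpt_transMat_nonneg G g Q) none).2 ?_
  rintro (_ | u)
  · exact .inl rfl
  · rw [initVec_some_eq_zero_iff, interdictOpt_transMat_some_none_eq_zero_iff]
    cases g u <;> simp

lemma captureProb_eq_one_sub :
    captureProb G g Q = 1 - (initVec g ᵥ* (interdictOpt (transMat G g) Q ^ 2)) none := by
  rw [captureProb, inv_one_sub_eq_geom_sum (interdictOpt_transMat_pow_three G g Q)]
  simp only [Finset.sum_range_succ, Finset.sum_range_zero, zero_add, pow_zero, pow_one,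
    vecMul_add, vecMul_one, Pi.add_apply, initVec_vecMul_interdictOpt_transMat_none]
  simp [initVec]

lemma captureProb_le_one : captureProb G g Q ≤ 1 := by
  have hN := interdictOpt_transMat_nonneg G g Q
  have hescape := vecMul_nonneg (vecMul_nonneg (initVec_nonneg g) hN) hN none
  rw [vecMul_vecMul, ← sq, Pi.zero_apply] at hescape
  rw [captureProb_eq_one_sub]
  linarith

lemma captureProb_eq_one_iff_forall_adj_src_pen :
    captureProb G g Q = 1 ↔
      ∀ u v, G.Adj u v → g u = false → g v = true → u ∈ Q ∨ v ∈ Q := by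
  have hN := interdictOpt_transMat_nonneg G g Q
  rw [captureProb_eq_one_sub, sub_eq_self, sq, ← vecMul_vecMul,
    vecMul_apply_eq_zero_iff_of_nonneg (vecMul_nonneg (initVec_nonneg g) hN) hN]
  simp only [vecMul_apply_eq_zero_iff_of_nonneg (initVec_nonneg g) hN, Option.forall,
    initVec_some_eq_zero_iff, interdictOpt_transMat_none,
    interdictOpt_transMat_some_none_eq_zero_iff,
    interdictOpt_transMat_some_some_eq_zero_iff, or_true, true_and]
  grind

lemma captureProb_eq_one_iff :
    captureProb G g Q = 1 ↔ ∀ u v, G.Adj u v → g u ≠ g v → u ∈ Q ∨ v ∈ Q := by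
  rw [captureProb_eq_one_iff_forall_adj_src_pen]
  refine ⟨fun h u v huv hne => ?_, fun h u v huv hu hv => h u v huv (by simp [hu, hv])⟩
  cases hu : g u <;> cases hv : g v
  · exact absurd (hu.trans hv.symm) hne
  · exact h u v huv hu hv
  · exact (h v u huv.symm hv hu).symm
  · exact absurd (hu.trans hv.symm) hne

end Reduction

lemma add_div_two_eq_one_iff {a b : ℝ} (ha : a ≤ 1) (hb : b ≤ 1) :
    (a + b) / 2 = 1 ↔ a = 1 ∧ b = 1 :=
  ⟨fun h => ⟨by linarith, by linarith⟩, fun ⟨ha, hb⟩ => by rw [ha, hb]; norm_num⟩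

/-- The paper's two-evader UME instance built from a proper pair-coloring `f` of a finite
simple graph `G` (evader `i` uses the `i`-th bit of `f`): the expected capture probability
`(J¹(Q) + J²(Q))/2` equals `1` if and only if `Q` is a vertex cover of `G`. -/
theorem two_evader_capture_prob_eq_one_iff_vertex_cover
    (G : SimpleGraph V) [DecidableRel G.Adj]
    (f : V → Bool × Bool) (hf : ∀ u v : V, G.Adj u v → f u ≠ f v) (Q : Finset V) :
    (captureProb G (fun u => (f u).1) Q + captureProb G (fun u => (f u).2) Q) / 2 = 1 ↔
      ∀ u v : V, G.Adj u v → u ∈ Q ∨ v ∈ Q := by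
  rw [add_div_two_eq_one_iff (captureProb_le_one ..) (captureProb_le_one ..),
    captureProb_eq_one_iff, captureProb_eq_one_iff]
  refine ⟨fun ⟨c₁, c₂⟩ u v huv => ?_,
    fun h => ⟨fun u v huv _ => h u v huv, fun u v huv _ => h u v huv⟩⟩
  by_cases h₁ : (f u).1 = (f v).1
  · exact c₂ u v huv fun h₂ => hf u v huv (Prod.ext h₁ h₂)
  · exact c₁ u v huv h₁

end
end

section
/- Let G be a finite simple graph on vertex set V with a proper pair-coloring f, and let S_1, P_1, S_2, P_2 be the associated source and penultimate sets. For Q ⊆ V and i ∈ {1,2} let R_i(Q) denote the reach probability for (S_i, P_i, Q). Then R_1(Q) = 0 and R_2(Q) = 0 if and only if Q is a vertex cover of G. -/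
open Finset

/-- The reach probability for a graph `G`, source set `S`, penultimate set `P`, and
interdiction set `Q`: the probability that an evader starting uniformly on `S`, moving to a
uniformly chosen neighbor in `P`, and then to the target, avoids every node of `Q`.
(Divisions by zero are `0` in `ℝ`, matching the conventions `R(Q) = 0` when `S = ∅` and
terms with `N(u) ∩ P = ∅` taken to be `0`.) -/
noncomputable def reachProb {V : Type*} [Fintype V] [DecidableEq V]
    (G : SimpleGraph V) [DecidableRel G.Adj] (S P Q : Finset V) : ℝ :=
  ∑ u ∈ S \ Q, (1 / (S.card : ℝ)) *
    ((((G.neighborFinset u ∩ P) \ Q).card : ℝ) / (((G.neighborFinset u ∩ P)).card : ℝ))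

lemma reachProb_eq_zero_of_cover {V : Type*} [Fintype V] [DecidableEq V]
    (G : SimpleGraph V) [DecidableRel G.Adj] (S P Q : Finset V)
    (h : ∀ u v : V, G.Adj u v → u ∈ Q ∨ v ∈ Q) : reachProb G S P Q = 0 := by
  unfold reachProb
  apply Finset.sum_eq_zero
  intro u hu
  simp only [Finset.mem_sdiff] at hu
  have hempty : (G.neighborFinset u ∩ P) \ Q = ∅ := by
    ext v
    simp only [Finset.mem_sdiff, Finset.mem_inter, SimpleGraph.mem_neighborFinset,
      Finset.notMem_empty, iff_false, not_and]
    rintro ⟨hadj, -⟩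
    rcases h u v hadj with h1 | h1
    · exact absurd h1 hu.2
    · exact fun hv => hv h1
  simp [hempty]

lemma mem_of_reachProb_zero {V : Type*} [Fintype V] [DecidableEq V]
    (G : SimpleGraph V) [DecidableRel G.Adj] (S P Q : Finset V)
    (h0 : reachProb G S P Q = 0) {u v : V} (hu : u ∈ S) (huQ : u ∉ Q)
    (hadj : G.Adj u v) (hv : v ∈ P) : v ∈ Q := by
  by_contra hvQ
  have hnonneg : ∀ w ∈ S \ Q, 0 ≤ (1 / (S.card : ℝ)) *
      ((((G.neighborFinset w ∩ P) \ Q).card : ℝ) / (((G.neighborFinset w ∩ P)).card : ℝ)) := by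
    intro w _; positivity
  have hterm := (Finset.sum_eq_zero_iff_of_nonneg hnonneg).mp h0 u
    (Finset.mem_sdiff.mpr ⟨hu, huQ⟩)
  have hScard : (0:ℝ) < (S.card : ℝ) := by
    exact_mod_cast Finset.card_pos.mpr ⟨u, hu⟩
  have hvmem : v ∈ (G.neighborFinset u ∩ P) \ Q := by
    simp [Finset.mem_sdiff, SimpleGraph.mem_neighborFinset, hadj, hv, hvQ]
  have hden : (0:ℝ) < ((G.neighborFinset u ∩ P).card : ℝ) := by
    have : v ∈ G.neighborFinset u ∩ P := (Finset.mem_sdiff.mp hvmem).1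
    exact_mod_cast Finset.card_pos.mpr ⟨v, this⟩
  have hnum : (0:ℝ) < (((G.neighborFinset u ∩ P) \ Q).card : ℝ) := by
    exact_mod_cast Finset.card_pos.mpr ⟨v, hvmem⟩
  have : (0:ℝ) < (1 / (S.card : ℝ)) *
      ((((G.neighborFinset u ∩ P) \ Q).card : ℝ) / (((G.neighborFinset u ∩ P)).card : ℝ)) := by
    positivity
  linarith [this, hterm.ge, hterm.le]

/-- Given a proper pair-coloring `f` of a finite simple graph `G` with associated source and
penultimate sets `S_i`, `P_i` (`i ∈ {1,2}`), the reach probabilities of both evaders vanish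
iff `Q` is a vertex cover of `G`. -/
theorem both_reach_probs_zero_iff_vertex_cover
    {V : Type*} [Fintype V] [DecidableEq V] (G : SimpleGraph V) [DecidableRel G.Adj]
    (f : V → Bool × Bool) (hf : ∀ u v : V, G.Adj u v → f u ≠ f v)
    (S₁ : Finset V) (hS₁ : S₁ = Finset.univ.filter (fun u => (f u).1 = false))
    (P₁ : Finset V) (hP₁ : P₁ = Finset.univ.filter (fun u => (f u).1 = true))
    (S₂ : Finset V) (hS₂ : S₂ = Finset.univ.filter (fun u => (f u).2 = false))
    (P₂ : Finset V) (hP₂ : P₂ = Finset.univ.filter (fun u => (f u).2 = true))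
    (Q : Finset V) :
    (reachProb G S₁ P₁ Q = 0 ∧ reachProb G S₂ P₂ Q = 0) ↔
      ∀ u v : V, G.Adj u v → u ∈ Q ∨ v ∈ Q := by
  constructor
  · rintro ⟨h1, h2⟩ u v hadj
    by_cases huQ : u ∈ Q
    · exact Or.inl huQ
    by_cases hvQ : v ∈ Q
    · exact Or.inr hvQ
    exfalso
    have hne := hf u v hadj
    have hdiff : (f u).1 ≠ (f v).1 ∨ (f u).2 ≠ (f v).2 := by
      by_contra h
      push_neg at h
      exact hne (Prod.ext h.1 h.2)
    rcases hdiff with hd | hd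
    · rcases Bool.eq_false_or_eq_true (f u).1 with h | h
      · have hvf : (f v).1 = false := by
          rw [h] at hd; simpa using Ne.symm hd
        exact huQ (mem_of_reachProb_zero G S₁ P₁ Q h1
          (by simp [hS₁, hvf]) hvQ hadj.symm (by simp [hP₁, h]))
      · have hvt : (f v).1 = true := by
          rw [h] at hd; simpa using Ne.symm hd
        exact hvQ (mem_of_reachProb_zero G S₁ P₁ Q h1
          (by simp [hS₁, h]) huQ hadj (by simp [hP₁, hvt]))
    · rcases Bool.eq_false_or_eq_true (f u).2 with h | h
      · have hvf : (f v).2 = false := by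
          rw [h] at hd; simpa using Ne.symm hd
        exact huQ (mem_of_reachProb_zero G S₂ P₂ Q h2
          (by simp [hS₂, hvf]) hvQ hadj.symm (by simp [hP₂, h]))
      · have hvt : (f v).2 = true := by
          rw [h] at hd; simpa using Ne.symm hd
        exact hvQ (mem_of_reachProb_zero G S₂ P₂ Q h2
          (by simp [hS₂, h]) huQ hadj (by simp [hP₂, hvt]))
  · intro h
    exact ⟨reachProb_eq_zero_of_cover G S₁ P₁ Q h, reachProb_eq_zero_of_cover G S₂ P₂ Q h⟩
end

section
/- Let V be a finite type, let S, P, T be pairwise disjoint subsets of V, let M be a real matrix indexed by V that is layered with respect to S, P, T, let a : V → ℝ be a row vector with a u = 0 for all u ∉ S, and let t ∈ T. Then (a ᵥ* (1 - M)⁻¹)(t) = Σ_{u ∈ V} Σ_{v ∈ V} a u * M u v * M v t. -/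
open Matrix

/-- A real matrix indexed by `V` is *layered* with respect to sets `S, P, T` if its entry
`M u v` vanishes unless (`u ∈ S` and `v ∈ P`) or (`u ∈ P` and `v ∈ T`). -/
def IsLayered {V : Type*} (S P T : Set V) (M : Matrix V V ℝ) : Prop :=
  ∀ u v : V, ¬ ((u ∈ S ∧ v ∈ P) ∨ (u ∈ P ∧ v ∈ T)) → M u v = 0

/-- For a layered matrix `M` (with respect to pairwise disjoint `S, P, T`), a row vector `a`
supported on `S`, and a target `t ∈ T`, the absorption probability `(a ᵥ* (1 - M)⁻¹) t`
reduces to the explicit sum over two-step paths from `S` through `P` to `t`. -/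
theorem layered_absorption_prob_eq_two_step_sum
    {V : Type*} [Fintype V] [DecidableEq V] (S P T : Set V)
    (hSP : Disjoint S P) (hST : Disjoint S T) (hPT : Disjoint P T)
    (M : Matrix V V ℝ) (hM : IsLayered S P T M)
    (a : V → ℝ) (ha : ∀ u : V, u ∉ S → a u = 0) (t : V) (ht : t ∈ T) :
    (a ᵥ* (1 - M)⁻¹) t = ∑ u : V, ∑ v : V, a u * M u v * M v t := by
  have h3 : M * M * M = 0 := by
    ext u x
    simp only [Matrix.mul_apply, Matrix.zero_apply]
    apply Finset.sum_eq_zero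
    intro w _
    rcases eq_or_ne (M w x) 0 with h | h
    · simp [h]
    · have hw : (w ∈ S ∧ x ∈ P) ∨ (w ∈ P ∧ x ∈ T) := by
        by_contra hc; exact h (hM w x hc)
      have hsum : ∑ v, M u v * M v w = 0 := by
        apply Finset.sum_eq_zero
        intro v _
        rcases eq_or_ne (M v w) 0 with h2 | h2
        · simp [h2]
        · have hv : (v ∈ S ∧ w ∈ P) ∨ (v ∈ P ∧ w ∈ T) := by
            by_contra hc; exact h2 (hM v w hc)
          have huv : M u v = 0 := by
            apply hM
            rintro (⟨_, hvP⟩ | ⟨hvP, hvT⟩)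
            · rcases hv with ⟨hvS, _⟩ | ⟨_, hwT⟩
              · exact Set.disjoint_left.mp hSP hvS hvP
              · rcases hw with ⟨hwS, _⟩ | ⟨hwP, _⟩
                · exact Set.disjoint_right.mp hST hwT hwS
                · exact Set.disjoint_left.mp hPT hwP hwT
            · rcases hv with ⟨hvS, _⟩ | ⟨hvP', _⟩
              · exact Set.disjoint_left.mp hST hvS hvT
              · exact Set.disjoint_left.mp hPT hvP' hvT
          simp [huv]
      rw [hsum, zero_mul]
  have hinv : (1 - M)⁻¹ = 1 + M + M * M := by
    apply inv_eq_right_inv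
    rw [show (1 - M) * (1 + M + M * M) = 1 - M * M * M by noncomm_ring, h3, sub_zero]
  have h1 : a t = 0 := ha t (fun h => Set.disjoint_left.mp hST h ht)
  have h2 : (a ᵥ* M) t = 0 := by
    simp only [Matrix.vecMul, dotProduct]
    apply Finset.sum_eq_zero
    intro u _
    rcases eq_or_ne (a u) 0 with h | h
    · simp [h]
    · have hu : u ∈ S := by by_contra hc; exact h (ha u hc)
      have hMut : M u t = 0 := by
        apply hM
        rintro (⟨_, htP⟩ | ⟨huP, _⟩)
        · exact Set.disjoint_left.mp hPT htP ht
        · exact Set.disjoint_left.mp hSP hu huP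
      simp [hMut]
  rw [hinv, Matrix.vecMul_add, Matrix.vecMul_add, Matrix.vecMul_one]
  simp only [Pi.add_apply, h1, h2, zero_add]
  simp only [Matrix.vecMul, dotProduct, Matrix.mul_apply, Finset.mul_sum, mul_assoc]
end

section
/- Let V be a finite type, let S, P, T be pairwise disjoint subsets of V, let M be a real matrix indexed by V that is layered with respect to S, P, T and has all entries nonnegative, let a : V → ℝ be a row vector with nonnegative entries and with a u = 0 for all u ∉ S, let t ∈ T, and let Q ⊆ V. Then (a ᵥ* (1 - M_Q)⁻¹)(t) = 0 if and only if for all u ∉ Q and all v ∉ Q, a u * M u v * M v t = 0. -/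
open Matrix

open Classical in
/-- The node-interdicted matrix `M_Q`: all rows indexed by nodes of `Q` are zeroed,
modeling perfect sensors (`d = 1`) on all edges leaving nodes of `Q`. -/
noncomputable def interdict {V : Type*} (M : Matrix V V ℝ) (Q : Set V) : Matrix V V ℝ :=
  Matrix.of fun u v => if u ∈ Q then 0 else M u v

/-- For a nonnegative layered matrix `M` (with respect to pairwise disjoint `S, P, T`), a
nonnegative row vector `a` supported on `S`, a target `t ∈ T`, and an interdiction set `Q`,
the evader's probability `(a ᵥ* (1 - M_Q)⁻¹) t` of reaching `t` while avoiding `Q` vanishes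
iff every positive-probability two-step path from a source through a penultimate node to `t`
passes through `Q`. -/
theorem interdicted_absorption_prob_eq_zero_iff
    {V : Type*} [Fintype V] [DecidableEq V] (S P T : Set V)
    (hSP : Disjoint S P) (hST : Disjoint S T) (hPT : Disjoint P T)
    (M : Matrix V V ℝ) (hM : IsLayered S P T M) (hMnn : ∀ u v : V, 0 ≤ M u v)
    (a : V → ℝ) (hann : ∀ u : V, 0 ≤ a u) (ha : ∀ u : V, u ∉ S → a u = 0)
    (t : V) (ht : t ∈ T) (Q : Set V) :
    (a ᵥ* (1 - interdict M Q)⁻¹) t = 0 ↔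
      ∀ u : V, u ∉ Q → ∀ v : V, v ∉ Q → a u * M u v * M v t = 0 := by
  classical
  set N : Matrix V V ℝ := interdict M Q with hNdef
  have hNval : ∀ u v : V, N u v = if u ∈ Q then 0 else M u v := by
    intro u v; simp [hNdef, interdict]
  have hN : IsLayered S P T N := by
    intro u v h
    rw [hNval]
    split_ifs with hq
    · rfl
    · exact hM u v h
  have hNnn : ∀ u v : V, 0 ≤ N u v := by
    intro u v
    rw [hNval]
    split_ifs with hq
    · exact le_refl 0
    · exact hMnn u v
  -- key vanishing facts
  have hstep : ∀ u w x : V, x ∉ T → N u w * N w x = 0 := by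
    intro u w x hx
    by_cases h1 : (u ∈ S ∧ w ∈ P) ∨ (u ∈ P ∧ w ∈ T)
    · have hw2 : N w x = 0 := by
        apply hN
        rintro (⟨hwS, hxP⟩ | ⟨hwP, hxT⟩)
        · rcases h1 with ⟨_, hwP⟩ | ⟨_, hwT⟩
          · exact Set.disjoint_left.mp hSP hwS hwP
          · exact Set.disjoint_left.mp hST hwS hwT
        · exact hx hxT
      rw [hw2, mul_zero]
    · rw [hN u w h1, zero_mul]
  have hN3 : N * N * N = 0 := by
    ext u v
    rw [Matrix.mul_apply]
    simp only [Matrix.zero_apply]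
    apply Finset.sum_eq_zero
    intro x _
    by_cases hx : x ∈ T
    · have : N x v = 0 := by
        apply hN
        rintro (⟨hxS, _⟩ | ⟨hxP, _⟩)
        · exact Set.disjoint_left.mp hST hxS hx
        · exact Set.disjoint_left.mp hPT hxP hx
      rw [this, mul_zero]
    · rw [Matrix.mul_apply]
      rw [Finset.sum_eq_zero fun w _ => hstep u w x hx, zero_mul]
  have hunit : (1 - N) * (1 + N + N * N) = 1 := by
    have h : (1 - N) * (1 + N + N * N) = 1 - N * N * N := by noncomm_ring
    rw [h, hN3, sub_zero]
  have hinv : (1 - N)⁻¹ = 1 + N + N * N := Matrix.inv_eq_right_inv hunit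
  have htS : t ∉ S := Set.disjoint_right.mp hST ht
  have hat : a t = 0 := ha t htS
  have haN : (a ᵥ* N) t = 0 := by
    simp only [Matrix.vecMul, dotProduct]
    apply Finset.sum_eq_zero
    intro u _
    by_cases hu : u ∈ S
    · have : N u t = 0 := by
        apply hN
        rintro (⟨_, htP⟩ | ⟨huP, _⟩)
        · exact Set.disjoint_left.mp hPT htP ht
        · exact Set.disjoint_left.mp hSP hu huP
      rw [this, mul_zero]
    · rw [ha u hu, zero_mul]
  have key : (a ᵥ* (1 - N)⁻¹) t = ∑ u, ∑ v, a u * N u v * N v t := by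
    rw [hinv, Matrix.vecMul_add, Matrix.vecMul_add, Matrix.vecMul_one]
    simp only [Pi.add_apply]
    rw [hat, haN, zero_add, zero_add]
    simp only [Matrix.vecMul, dotProduct]
    apply Finset.sum_congr rfl
    intro u _
    rw [Matrix.mul_apply, Finset.mul_sum]
    apply Finset.sum_congr rfl
    intro v _
    ring
  rw [key]
  constructor
  · intro hz u hu v hv
    have hnn : ∀ u ∈ Finset.univ, (0:ℝ) ≤ ∑ v, a u * N u v * N v t := by
      intro u _
      apply Finset.sum_nonneg
      intro v _
      exact mul_nonneg (mul_nonneg (hann u) (hNnn u v)) (hNnn v t)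
    have h1 := (Finset.sum_eq_zero_iff_of_nonneg hnn).mp hz u (Finset.mem_univ u)
    have hnn2 : ∀ v ∈ Finset.univ, (0:ℝ) ≤ a u * N u v * N v t := by
      intro v _
      exact mul_nonneg (mul_nonneg (hann u) (hNnn u v)) (hNnn v t)
    have h2 := (Finset.sum_eq_zero_iff_of_nonneg hnn2).mp h1 v (Finset.mem_univ v)
    rw [hNval u v, hNval v t, if_neg hu, if_neg hv] at h2
    exact h2
  · intro h
    apply Finset.sum_eq_zero
    intro u _
    apply Finset.sum_eq_zero
    intro v _
    rw [hNval u v, hNval v t]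
    by_cases hu : u ∈ Q
    · rw [if_pos hu]; ring
    · rw [if_neg hu]
      by_cases hv : v ∈ Q
      · rw [if_pos hv]; ring
      · rw [if_neg hv]; exact h u hu v hv
end

section
/- Let G be a finite simple graph on vertex set V and let f : V → Bool be a function such that adjacent vertices receive different values (so G is bipartite with parts S = {u : f(u) = false} and P = {u : f(u) = true}). Then for every Q ⊆ V, the reach probability R(Q) for (S, P, Q) equals 0 if and only if Q is a vertex cover of G. -/
open Finset

/-- For a bipartite graph, properly colored by `f : V → Bool` with parts
`S = {u | f u = false}` and `P = {u | f u = true}`, a single evader suffices: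
the reach probability for `(S, P, Q)` vanishes iff `Q` is a vertex cover of `G`. -/
theorem bipartite_reach_prob_zero_iff_vertex_cover
    {V : Type*} [Fintype V] [DecidableEq V] (G : SimpleGraph V) [DecidableRel G.Adj]
    (f : V → Bool) (hf : ∀ u v : V, G.Adj u v → f u ≠ f v)
    (S : Finset V) (hS : S = Finset.univ.filter (fun u => f u = false))
    (P : Finset V) (hP : P = Finset.univ.filter (fun u => f u = true)) :
    ∀ Q : Finset V,
      reachProb G S P Q = 0 ↔ ∀ u v : V, G.Adj u v → u ∈ Q ∨ v ∈ Q := by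
  intro Q
  -- For u ∈ S, all neighbors are in P
  have hsub : ∀ u : V, f u = false → G.neighborFinset u ∩ P = G.neighborFinset u := by
    intro u hu
    apply inter_eq_left.2
    intro v hv
    rw [SimpleGraph.mem_neighborFinset] at hv
    have := hf u v hv
    rw [hP, mem_filter]
    refine ⟨mem_univ _, ?_⟩
    cases hfv : f v with
    | false => rw [hu, hfv] at this; exact absurd rfl this
    | true => rfl
  have hnn : ∀ u ∈ S \ Q, (0:ℝ) ≤ (1 / (S.card : ℝ)) *
      ((((G.neighborFinset u ∩ P) \ Q).card : ℝ) / (((G.neighborFinset u ∩ P)).card : ℝ)) := by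
    intro u _
    positivity
  rw [reachProb, Finset.sum_eq_zero_iff_of_nonneg hnn]
  constructor
  · intro h u v huv
    by_contra hc
    push_neg at hc
    obtain ⟨hu, hv⟩ := hc
    -- WLOG f u = false
    wlog hfu : f u = false generalizing u v
    · exact this v u huv.symm hv hu (by
        have := hf u v huv
        cases hfv : f v with
        | false => rfl
        | true => cases hfu' : f u with
          | false => exact absurd hfu' hfu
          | true => rw [hfu', hfv] at this; exact absurd rfl this)
    have huS : u ∈ S \ Q := by
      rw [mem_sdiff, hS, mem_filter]
      exact ⟨⟨mem_univ _, hfu⟩, hu⟩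
    have hterm := h u huS
    have hScard : (0:ℝ) < S.card := by
      have : u ∈ S := (mem_sdiff.1 huS).1
      exact_mod_cast card_pos.2 ⟨u, this⟩
    have hvin : v ∈ (G.neighborFinset u ∩ P) \ Q := by
      rw [mem_sdiff, hsub u hfu, SimpleGraph.mem_neighborFinset]
      exact ⟨huv, hv⟩
    have hNpos : (0:ℝ) < ((G.neighborFinset u ∩ P)).card := by
      exact_mod_cast card_pos.2 ⟨v, (mem_sdiff.1 hvin).1⟩
    have hNum : (0:ℝ) < (((G.neighborFinset u ∩ P) \ Q).card : ℝ) := by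
      exact_mod_cast card_pos.2 ⟨v, hvin⟩
    have : (0:ℝ) < (1 / (S.card : ℝ)) *
        ((((G.neighborFinset u ∩ P) \ Q).card : ℝ) / (((G.neighborFinset u ∩ P)).card : ℝ)) := by
      positivity
    linarith
  · intro h u hu
    have hfu : f u = false := by
      have := (mem_sdiff.1 hu).1
      rw [hS, mem_filter] at this
      exact this.2
    have huQ : u ∉ Q := (mem_sdiff.1 hu).2
    have hempty : (G.neighborFinset u ∩ P) \ Q = ∅ := by
      rw [hsub u hfu]
      apply eq_empty_of_forall_notMem
      intro v hv
      rw [mem_sdiff, SimpleGraph.mem_neighborFinset] at hv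
      rcases h u v hv.1 with h1 | h2
      · exact huQ h1
      · exact hv.2 h2
    rw [hempty]
    simp
end
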